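/- Fix integers d ≥ 1 and n ≥ 1, and let γ_i denote the coefficient of t^i in (1 + t + ⋯ + t^{n−1})^{d+1}, for 0 ≤ i ≤ L where L = (n−1)(d+1). Then the coefficients are positive (γ_i > 0 for 0 ≤ i ≤ L), symmetric (γ_i = γ_{L−i} for 0 ≤ i ≤ L), and strictly unimodal: γ_{i−1} < γ_i for all 1 ≤ i ≤ ⌊L/2⌋ (equivalently, by symmetry, γ_i > γ_{i+1} for ⌈L/2⌉ ≤ i ≤ L−1). -/

import Mathlib

open Polynomial

/-- The polynomial `1 + t + ⋯ + t^{n-1}`. -/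
noncomputable def geomPoly (n : ℕ) : Polynomial ℤ :=
  ∑ j ∈ Finset.range n, X ^ j

/-!
Write `γ^{(k)}` for the coefficients of `P^k`, `P = 1 + t + ⋯ + t^{n-1}`. Positivity and symmetry
pass from `P` to its powers. For unimodality, multiplying `P (t - 1) = t^n - 1` by `P^k` gives
`γ^{(k+1)}_{i+1} - γ^{(k+1)}_i = γ^{(k)}_{i+1} - γ^{(k)}_{i+1-n}` (the last term being `0` for
`i + 1 < n`). Below the middle of `P^{k+1}`, the indices `i + 1 - n < i + 1` sum to less than the
degree of `P^k`, so the right-hand side is positive once `γ^{(k)}` is positive, symmetric and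
strictly unimodal. For `k = 1` the index `i + 1 - n` is always negative, which starts the induction
at `P^2`.
-/

namespace Polynomial

variable {R : Type*} [Semiring R] [PartialOrder R] [IsOrderedRing R] {p q : R[X]}

theorem coeff_mul_nonneg (hp : ∀ i, 0 ≤ p.coeff i) (hq : ∀ i, 0 ≤ q.coeff i) (i : ℕ) :
    0 ≤ (p * q).coeff i := by
  rw [coeff_mul]
  exact Finset.sum_nonneg fun x _ => mul_nonneg (hp x.1) (hq x.2)

theorem coeff_mul_coeff_le_coeff_mul (hp : ∀ i, 0 ≤ p.coeff i) (hq : ∀ i, 0 ≤ q.coeff i)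
    (a b : ℕ) : p.coeff a * q.coeff b ≤ (p * q).coeff (a + b) := by
  rw [coeff_mul]
  exact Finset.single_le_sum (f := fun x => p.coeff x.1 * q.coeff x.2)
    (fun x _ => mul_nonneg (hp x.1) (hq x.2)) (a := (a, b))
    (Finset.HasAntidiagonal.mem_antidiagonal.mpr rfl)

theorem coeff_pow_nonneg (hp : ∀ i, 0 ≤ p.coeff i) (k i : ℕ) : 0 ≤ (p ^ k).coeff i := by
  induction k generalizing i with
  | zero => rw [pow_zero, coeff_one]; split_ifs <;> simp
  | succ k ih => rw [pow_succ]; exact coeff_mul_nonneg ih hp i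

end Polynomial

theorem StrictMonoOn.lt_of_symm {α : Type*} [Preorder α] {c : ℕ → α} {L a b : ℕ}
    (hmono : StrictMonoOn c (Set.Iic (L / 2))) (hsymm : ∀ i ≤ L, c i = c (L - i))
    (hab : a < b) (hsum : a + b < L) : c a < c b := by
  by_cases hb : b ≤ L / 2
  · exact hmono (by simp only [Set.mem_Iic]; omega) hb hab
  · rw [hsymm b (by omega)]
    exact hmono (by simp only [Set.mem_Iic]; omega) (by simp only [Set.mem_Iic]; omega) (by omega)

theorem coeff_geomPoly (n i : ℕ) : (geomPoly n).coeff i = if i < n then 1 else 0 := by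
  simp [geomPoly, coeff_X_pow]

theorem coeff_geomPoly_nonneg (n i : ℕ) : 0 ≤ (geomPoly n).coeff i := by
  rw [coeff_geomPoly]; split_ifs <;> simp

theorem natDegree_geomPoly_le (n : ℕ) : (geomPoly n).natDegree ≤ n - 1 := by
  refine natDegree_sum_le_of_forall_le _ _ fun j hj => ?_
  rw [natDegree_X_pow]
  exact Nat.le_sub_one_of_lt (Finset.mem_range.mp hj)

theorem natDegree_geomPoly_pow_le (n k : ℕ) : (geomPoly n ^ k).natDegree ≤ (n - 1) * k :=
  natDegree_pow_le_of_le k (natDegree_geomPoly_le n) |>.trans_eq (Nat.mul_comm _ _)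

theorem coeff_geomPoly_pow_pos {n : ℕ} (hn : 1 ≤ n) (k : ℕ) :
    ∀ i ≤ (n - 1) * k, 0 < (geomPoly n ^ k).coeff i := by
  induction k with
  | zero => intro i hi; simp [Nat.le_zero.mp (by simpa using hi)]
  | succ k ih =>
    intro i hi
    rw [Nat.mul_succ] at hi
    obtain ⟨a, b, rfl, ha, hb⟩ : ∃ a b, i = a + b ∧ a ≤ (n - 1) * k ∧ b < n :=
      ⟨min i ((n - 1) * k), i - min i ((n - 1) * k), by omega, min_le_right _ _, by omega⟩
    calc 0 < (geomPoly n ^ k).coeff a * (geomPoly n).coeff b := by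
          rw [coeff_geomPoly, if_pos hb, mul_one]; exact ih a ha
      _ ≤ (geomPoly n ^ (k + 1)).coeff (a + b) := by
          rw [pow_succ]
          exact coeff_mul_coeff_le_coeff_mul (coeff_pow_nonneg (coeff_geomPoly_nonneg n) k)
            (coeff_geomPoly_nonneg n) a b

theorem reflect_geomPoly (n : ℕ) : reflect (n - 1) (geomPoly n) = geomPoly n := by
  ext i
  rw [coeff_reflect]
  rcases le_or_gt i (n - 1) with h | h
  · rw [revAt_le h, coeff_geomPoly, coeff_geomPoly]
    split_ifs <;> first | rfl | omega
  · rw [revAt_eq_self_of_lt h]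

theorem reflect_geomPoly_pow (n k : ℕ) :
    reflect ((n - 1) * k) (geomPoly n ^ k) = geomPoly n ^ k := by
  induction k with
  | zero => simp
  | succ k ih =>
    rw [pow_succ, Nat.mul_succ, reflect_mul _ _ (natDegree_geomPoly_pow_le n k)
      (natDegree_geomPoly_le n), ih, reflect_geomPoly]

theorem coeff_geomPoly_pow_symm (n k : ℕ) {i : ℕ} (hi : i ≤ (n - 1) * k) :
    (geomPoly n ^ k).coeff i = (geomPoly n ^ k).coeff ((n - 1) * k - i) := by
  conv_lhs => rw [← reflect_geomPoly_pow n k]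
  rw [coeff_reflect, revAt_le hi]

theorem coeff_geomPoly_pow_succ_sub (n k i : ℕ) :
    (geomPoly n ^ (k + 1)).coeff (i + 1) - (geomPoly n ^ (k + 1)).coeff i =
      (geomPoly n ^ k).coeff (i + 1) -
        if n ≤ i + 1 then (geomPoly n ^ k).coeff (i + 1 - n) else 0 := by
  have h : geomPoly n ^ (k + 1) * (X - C 1) = geomPoly n ^ k * X ^ n - geomPoly n ^ k := by
    rw [pow_succ, mul_assoc, map_one, geomPoly, geom_sum_mul, mul_sub, mul_one]
  have := congrArg (coeff · (i + 1)) h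
  simp only [coeff_mul_X_sub_C, coeff_sub, coeff_mul_X_pow', mul_one] at this
  linarith

theorem coeff_geomPoly_pow_succ_lt {n k : ℕ} (hk : 1 ≤ k) {i : ℕ}
    (hgap : n ≤ i + 1 → (geomPoly n ^ k).coeff (i + 1 - n) < (geomPoly n ^ k).coeff (i + 1)) :
    (geomPoly n ^ (k + 1)).coeff i < (geomPoly n ^ (k + 1)).coeff (i + 1) := by
  have hdiff := coeff_geomPoly_pow_succ_sub n k i
  split_ifs at hdiff with h
  · linarith [hgap h]
  · have : n - 1 ≤ (n - 1) * k := Nat.le_mul_of_pos_right _ hk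
    linarith [coeff_geomPoly_pow_pos (n := n) (by omega) k (i + 1) (by omega)]

theorem strictMonoOn_coeff_geomPoly_pow {n : ℕ} (hn : 1 ≤ n) {k : ℕ} (hk : 2 ≤ k) :
    StrictMonoOn (geomPoly n ^ k).coeff (Set.Iic ((n - 1) * k / 2)) := by
  refine strictMonoOn_Iic_of_lt_succ fun i hi => ?_
  rw [Order.succ_eq_add_one]
  induction k, hk using Nat.le_induction generalizing i with
  | base => exact coeff_geomPoly_pow_succ_lt le_rfl fun h => by omega
  | succ k hk ih =>
    refine coeff_geomPoly_pow_succ_lt (by omega) fun h => ?_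
    rw [Nat.mul_succ] at hi
    exact (strictMonoOn_Iic_of_lt_succ ih).lt_of_symm (fun j => coeff_geomPoly_pow_symm n k)
      (by omega) (by omega)

theorem stmt17 (d n : ℕ) (hd : 1 ≤ d) (hn : 1 ≤ n) :
    -- the coefficients γ_i of (1 + t + ⋯ + t^{n-1})^{d+1}, 0 ≤ i ≤ L = (n-1)(d+1), are
    -- positive:
    (∀ i ≤ (n - 1) * (d + 1), 0 < (geomPoly n ^ (d + 1)).coeff i) ∧
    -- symmetric:
    (∀ i ≤ (n - 1) * (d + 1),
      (geomPoly n ^ (d + 1)).coeff i =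
        (geomPoly n ^ (d + 1)).coeff ((n - 1) * (d + 1) - i)) ∧
    -- strictly unimodal:
    (∀ i : ℕ, 1 ≤ i → i ≤ (n - 1) * (d + 1) / 2 →
      (geomPoly n ^ (d + 1)).coeff (i - 1) < (geomPoly n ^ (d + 1)).coeff i) := by
  refine ⟨coeff_geomPoly_pow_pos hn (d + 1), fun i => coeff_geomPoly_pow_symm n (d + 1),
    fun i hi hmid => ?_⟩
  have hmono := strictMonoOn_coeff_geomPoly_pow hn (k := d + 1) (by omega)
  exact hmono (by simp only [Set.mem_Iic]; omega) hmid (by omega)
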